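/- Let F be a field, let m ≥ 1 and N ≥ 0 be integers, let c : ℕ → F be a sequence of inputs, and let S : ℕ → Fin m → F be the circular shift-register state for c. Assume the tail-biting termination condition: for every residue class r modulo m, Σ_{i : 1 ≤ i ≤ N, i ≡ r (mod m)} c i = 0. Then for every 0 ≤ k ≤ N and every register index 0 ≤ j ≤ m−1, the forward state satisfies S k j = − Σ_{i : k < i ≤ N, i ≡ k − j (mod m)} c i; that is, the state reached by the forward encoder after inputs c₁,…,c_k coincides with the state computed by the backward (reverse-memory-labeled, time-reversed) encoder from the remaining inputs c_N,…,c_{k+1}. -/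

import Mathlib

/-!
Unrolling the recursion, an input `c i` enters register `0` at time `i` and then moves one
register per step cyclically, so at time `k` register `j` holds the sum of the inputs `c i`,
`i ≤ k`, with `i ≡ k - j (mod m)`. By the termination condition this sum is minus the sum of
the remaining inputs `c i`, `k < i ≤ N`, of the same residue class.
-/

open Finset

/-- The circular shift-register state for inputs `c : ℕ → F` (indices starting at 1) and
`m` registers: `S 0 j = 0`, `S k 0 = c k + S (k−1) (m−1)` for `k ≥ 1`, and
`S k j = S (k−1) (j−1)` for `k ≥ 1`, `1 ≤ j ≤ m−1`.  (In `Fin m`, `0 - 1 = m - 1`, so the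
single equation below covers both cases.) -/
def shiftState {F : Type*} [Field F] (m : ℕ) [NeZero m] (c : ℕ → F) :
    ℕ → Fin m → F
  | 0, _ => 0
  | (k + 1), j =>
      if j = 0 then c (k + 1) + shiftState m c k (j - 1)
      else shiftState m c k (j - 1)

namespace Fin

variable {m : ℕ} [NeZero m]

theorem natCast_val_sub_one (j : Fin m) :
    (((j - 1).val : ℕ) : ZMod m) = j.val - 1 := by
  have h := congrArg (fun x : Fin m => ((x.val : ℕ) : ZMod m)) (sub_add_cancel j 1)
  simp only [val_add, val_one', ZMod.natCast_mod, Nat.cast_add, Nat.cast_one] at h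
  exact eq_sub_of_add_eq h

theorem natCast_val_eq_zero_iff (j : Fin m) : ((j.val : ℕ) : ZMod m) = 0 ↔ j = 0 := by
  rw [ZMod.natCast_eq_zero_iff, ← Fin.val_eq_zero_iff]
  exact ⟨fun h => Nat.eq_zero_of_dvd_of_lt h j.isLt, fun h => h ▸ dvd_zero m⟩

end Fin

theorem Finset.sum_Icc_one_eq_add_sum_Icc_succ {M : Type*} [AddCommMonoid M] (f : ℕ → M)
    {k N : ℕ} (hk : k ≤ N) :
    ∑ i ∈ Icc 1 N, f i = ∑ i ∈ Icc 1 k, f i + ∑ i ∈ Icc (k + 1) N, f i := by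
  simpa only [← Icc_add_one_left_eq_Ioc, zero_add] using
    (sum_Ioc_consecutive f (Nat.zero_le k) hk).symm

section

variable {F : Type*} [Field F] {m : ℕ} [NeZero m] (c : ℕ → F)

theorem shiftState_succ (k : ℕ) (j : Fin m) :
    shiftState m c (k + 1) j = (if j = 0 then c (k + 1) else 0) + shiftState m c k (j - 1) := by
  rw [shiftState]; split_ifs <;> simp

theorem shiftState_eq_sum_Icc_filter (k : ℕ) (j : Fin m) :
    shiftState m c k j = ∑ i ∈ (Icc 1 k).filter (fun i : ℕ => (i : ZMod m) = k - j.val), c i := by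
  induction k generalizing j with
  | zero => simp [shiftState]
  | succ k ih =>
    have hinput : ((k + 1 : ℕ) : ZMod m) = (k + 1 : ℕ) - j.val ↔ j = 0 := by
      rw [eq_sub_iff_add_eq, add_eq_left, Fin.natCast_val_eq_zero_iff]
    rw [shiftState_succ, ih, Fin.natCast_val_sub_one, sum_filter, sum_filter,
      sum_Icc_succ_top (Nat.le_add_left 1 k), ← if_congr hinput rfl rfl, add_comm,
      sub_sub_eq_add_sub, Nat.cast_succ]

end

/-- Lemma 2: under the tail-biting termination condition (every residue
class sum of the inputs `c₁, …, c_N` vanishes), the forward state at time `k ≤ N`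
coincides with the state computed by the backward encoder from the remaining inputs:
`S k j = − Σ_{k < i ≤ N, i ≡ k − j (mod m)} c i`. -/
theorem shiftState_eq_neg_backward_sum
    {F : Type*} [Field F] (m : ℕ) [NeZero m] (N : ℕ) (c : ℕ → F)
    (hterm : ∀ r : ZMod m,
      ∑ i ∈ (Finset.Icc 1 N).filter (fun i : ℕ => ((i : ZMod m)) = r), c i = 0) :
    ∀ k ≤ N, ∀ j : Fin m,
      shiftState m c k j =
        - ∑ i ∈ (Finset.Icc (k + 1) N).filter
            (fun i : ℕ => ((i : ZMod m)) = (k : ZMod m) - (j.val : ZMod m)), c i := by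
  intro k hk j
  have hclass := hterm (k - j.val)
  rw [sum_filter, sum_Icc_one_eq_add_sum_Icc_succ _ hk, ← sum_filter, ← sum_filter,
    ← shiftState_eq_sum_Icc_filter] at hclass
  exact eq_neg_of_add_eq_zero_left hclass
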